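/- arXiv:2307.13484 — 10 statements merged into one kernel-verified Lean document; each statement's English description precedes it below -/
import Mathlib

section
/- Let 𝕜 be ℝ or ℂ, H a Hilbert space over 𝕜 whose inner product ⟪·,·⟫ is linear in the first argument, S a nonempty set, Φ : S → H a map, and define k(s,s₀) := ⟪Φ s₀, Φ s⟫. Let n ≥ 1, s₁,…,sₙ ∈ S and y₁,…,yₙ ∈ 𝕜. Then there exists g ∈ H with ⟪g, Φ sᵢ⟫ = yᵢ for all i if and only if there exists γ ∈ 𝕜ⁿ with Σⱼ k(sᵢ,sⱼ) γⱼ = yᵢ for all i. Moreover, for any such γ, the element g₀ := Σⱼ γⱼ · Φ sⱼ satisfies ⟪g₀, Φ sᵢ⟫ = yᵢ for all i, and for every h ∈ H with ⟪h, Φ sᵢ⟫ = yᵢ for all i one has ‖g₀‖ ≤ ‖h‖, with equality only if h = g₀ (i.e., g₀ is the unique minimum-norm interpolant). -/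
/-!
The interpolation conditions only see the component of `h` in the finite-dimensional span `K`
of the features `Φ sᵢ`. Projecting an interpolant onto `K` gives an interpolant of the form
`∑ⱼ γⱼ • Φ sⱼ`, whose conditions are exactly the kernel system `∑ⱼ k(sᵢ,sⱼ) γⱼ = yᵢ`. Any two
interpolants differ by a vector orthogonal to `K`, so for `g₀ ∈ K` Pythagoras gives
`‖h‖² = ‖g₀‖² + ‖h - g₀‖²`.
-/

open scoped InnerProductSpace

section Interpolation

variable {𝕜 H ι : Type*} [RCLike 𝕜] [NormedAddCommGroup H] [InnerProductSpace 𝕜 H] [Fintype ι]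

theorem inner_sum_smul_eq_sum_inner_mul (v : ι → H) (γ : ι → 𝕜) (i : ι) :
    ⟪v i, ∑ j, γ j • v j⟫_𝕜 = ∑ j, ⟪v i, v j⟫_𝕜 * γ j := by
  simp only [inner_sum, inner_smul_right, mul_comm]

theorem exists_gram_solution_of_interpolant (v : ι → H) {y : ι → 𝕜} {g : H}
    (hg : ∀ i, ⟪v i, g⟫_𝕜 = y i) : ∃ γ : ι → 𝕜, ∀ i, ∑ j, ⟪v i, v j⟫_𝕜 * γ j = y i := by
  set K := Submodule.span 𝕜 (Set.range v)
  have : FiniteDimensional 𝕜 K := FiniteDimensional.span_of_finite 𝕜 (Set.finite_range v)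
  obtain ⟨γ, hγ⟩ :=
    (Submodule.mem_span_range_iff_exists_fun 𝕜).mp (K.starProjection_apply_mem g)
  refine ⟨γ, fun i => ?_⟩
  have hvi : K.starProjection (v i) = v i :=
    K.starProjection_eq_self_iff.mpr (Submodule.subset_span ⟨i, rfl⟩)
  rw [← inner_sum_smul_eq_sum_inner_mul, hγ, ← K.inner_starProjection_left_eq_right, hvi, hg]

theorem norm_le_and_eq_of_inner_sub_eq_zero {g₀ h : H} (horth : ⟪g₀, h - g₀⟫_𝕜 = 0) :
    ‖g₀‖ ≤ ‖h‖ ∧ (‖g₀‖ = ‖h‖ → h = g₀) := by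
  have hpyth : ‖h‖ * ‖h‖ = ‖g₀‖ * ‖g₀‖ + ‖h - g₀‖ * ‖h - g₀‖ := by
    simpa using norm_add_sq_eq_norm_sq_add_norm_sq_of_inner_eq_zero g₀ (h - g₀) horth
  refine ⟨?_, fun heq => ?_⟩
  · nlinarith [norm_nonneg g₀, norm_nonneg h, mul_self_nonneg ‖h - g₀‖]
  · rwa [heq, left_eq_add, mul_self_eq_zero, norm_sub_eq_zero_iff] at hpyth

theorem inner_sum_smul_sub_eq_zero (v : ι → H) (γ : ι → 𝕜) {h : H}
    (hh : ∀ j, ⟪v j, h⟫_𝕜 = ⟪v j, ∑ i, γ i • v i⟫_𝕜) :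
    ⟪∑ j, γ j • v j, h - ∑ i, γ i • v i⟫_𝕜 = 0 := by
  simp only [sum_inner, inner_smul_left, inner_sub_right, hh, sub_self]

end Interpolation

/-- The paper's inner product `⟪a, b⟫` is linear in the *first* argument, hence equals
Mathlib's `inner b a`.  Evaluation of `g` at `s` is `⟪g, Φ s⟫ = inner 𝕜 (Φ s) g`, and the
kernel is `k s s₀ = ⟪Φ s₀, Φ s⟫ = inner 𝕜 (Φ s) (Φ s₀)`. -/
theorem stmt0_general {𝕜 : Type*} [RCLike 𝕜] {H : Type*} [NormedAddCommGroup H]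
    [InnerProductSpace 𝕜 H] {S : Type*} (Φ : S → H)
    (k : S → S → 𝕜) (hk : ∀ s s₀, k s s₀ = inner 𝕜 (Φ s) (Φ s₀))
    (n : ℕ) (s : Fin n → S) (y : Fin n → 𝕜) :
    ((∃ g : H, ∀ i, (inner 𝕜 (Φ (s i)) g : 𝕜) = y i) ↔
      ∃ γ : Fin n → 𝕜, ∀ i, ∑ j, k (s i) (s j) * γ j = y i) ∧
    ∀ γ : Fin n → 𝕜, (∀ i, ∑ j, k (s i) (s j) * γ j = y i) →
      ∀ g₀ : H, g₀ = ∑ j, γ j • Φ (s j) →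
        (∀ i, (inner 𝕜 (Φ (s i)) g₀ : 𝕜) = y i) ∧
        ∀ h : H, (∀ i, (inner 𝕜 (Φ (s i)) h : 𝕜) = y i) →
          ‖g₀‖ ≤ ‖h‖ ∧ (‖g₀‖ = ‖h‖ → h = g₀) := by
  obtain rfl : k = fun a b => inner 𝕜 (Φ a) (Φ b) := funext₂ hk
  have interpolates (γ : Fin n → 𝕜) (hγ : ∀ i, ∑ j, ⟪Φ (s i), Φ (s j)⟫_𝕜 * γ j = y i) (i : Fin n) :
      ⟪Φ (s i), ∑ j, γ j • Φ (s j)⟫_𝕜 = y i :=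
    (inner_sum_smul_eq_sum_inner_mul (Φ ∘ s) γ i).trans (hγ i)
  refine ⟨⟨fun ⟨g, hg⟩ => exists_gram_solution_of_interpolant (Φ ∘ s) hg,
    fun ⟨γ, hγ⟩ => ⟨_, interpolates γ hγ⟩⟩, fun γ hγ g₀ hg₀ => ?_⟩
  subst hg₀
  refine ⟨interpolates γ hγ, fun h hh => norm_le_and_eq_of_inner_sub_eq_zero (𝕜 := 𝕜) ?_⟩
  exact inner_sum_smul_sub_eq_zero (Φ ∘ s) γ fun j => (hh j).trans (interpolates γ hγ j).symm

/-- **Minimum-norm interpolation in an RKHS (feature-map form).**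
The paper's inner product `⟪a, b⟫` is linear in the *first* argument, hence equals
Mathlib's `inner b a`.  Evaluation of `g` at `s` is `⟪g, Φ s⟫ = inner (Φ s) g`, and the
kernel is `k s s₀ = ⟪Φ s₀, Φ s⟫ = inner (Φ s) (Φ s₀)`. -/
theorem stmt0 {𝕜 : Type*} [RCLike 𝕜] {H : Type*} [NormedAddCommGroup H]
    [InnerProductSpace 𝕜 H] {S : Type*} [Nonempty S] (Φ : S → H)
    (k : S → S → 𝕜) (hk : ∀ s s₀, k s s₀ = inner 𝕜 (Φ s) (Φ s₀))
    (n : ℕ) (hn : 1 ≤ n) (s : Fin n → S) (y : Fin n → 𝕜) :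
    ((∃ g : H, ∀ i, (inner 𝕜 (Φ (s i)) g : 𝕜) = y i) ↔
      ∃ γ : Fin n → 𝕜, ∀ i, ∑ j, k (s i) (s j) * γ j = y i) ∧
    ∀ γ : Fin n → 𝕜, (∀ i, ∑ j, k (s i) (s j) * γ j = y i) →
      ∀ g₀ : H, g₀ = ∑ j, γ j • Φ (s j) →
        (∀ i, (inner 𝕜 (Φ (s i)) g₀ : 𝕜) = y i) ∧
        ∀ h : H, (∀ i, (inner 𝕜 (Φ (s i)) h : 𝕜) = y i) →
          ‖g₀‖ ≤ ‖h‖ ∧ (‖g₀‖ = ‖h‖ → h = g₀) :=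
  stmt0_general Φ k hk n s y
end

section
/- Let α ∈ ℝ, n ≥ 1, and let s₁,…,sₙ be pairwise distinct complex numbers with Re(sᵢ) > −α for all i. Then the n×n complex matrix A with entries A_{ij} = 1/(2π(2α + sᵢ + conj(sⱼ))) is Hermitian and positive definite: for every nonzero x ∈ ℂⁿ, the quantity xᴴ A x is a positive real number. -/
/-!
With `w i = α + s i`, the entry `1 / (w i + conj (w j))` is the inner product in `L²(0, ∞)`
of `t ↦ exp (-conj (w i) t)` and `t ↦ exp (-conj (w j) t)`, so `A` is `(2π)⁻¹` times a Gram
matrix. That Gram matrix is positive definite because exponentials with distinct exponents are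
linearly independent on `(0, ∞)`: differentiating a vanishing combination
`∑ xⱼ exp (cⱼ t)` repeatedly gives `∑ xⱼ cⱼᵏ exp (cⱼ t) = 0` for all `k`, and the Vandermonde
determinant of the distinct `cⱼ` forces every `xⱼ` to vanish.
-/

open Matrix ComplexConjugate MeasureTheory Set Filter Complex
open scoped ComplexOrder Topology

section
variable {ι : Type*} [Fintype ι]

theorem hasDerivAt_sum_mul_cexp (x c : ι → ℂ) (t : ℝ) :
    HasDerivAt (fun u : ℝ => ∑ j, x j * cexp (c j * u))
      (∑ j, x j * c j * cexp (c j * t)) t := by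
  refine HasDerivAt.fun_sum fun j _ => ?_
  have hlin : HasDerivAt (fun u : ℝ => c j * (u : ℂ)) (c j) t := by
    simpa using (ofRealCLM.hasDerivAt (x := t)).const_mul (c j)
  simpa [mul_assoc, mul_comm (c j)] using hlin.cexp.const_mul (x j)

theorem eqOn_sum_mul_mul_cexp {x c : ι → ℂ} {U : Set ℝ} (hU : IsOpen U)
    (h : EqOn (fun t : ℝ => ∑ j, x j * cexp (c j * t)) 0 U) :
    EqOn (fun t : ℝ => ∑ j, x j * c j * cexp (c j * t)) 0 U := by
  intro t ht
  have hloc : (fun u : ℝ => ∑ j, x j * cexp (c j * u)) =ᶠ[𝓝 t] 0 :=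
    Filter.eventuallyEq_of_mem (hU.mem_nhds ht) h
  simpa [hloc.deriv_eq] using (hasDerivAt_sum_mul_cexp x c t).deriv.symm

theorem eq_zero_of_eqOn_sum_mul_cexp {x c : ι → ℂ}
    (hc : Function.Injective c) {U : Set ℝ} (hU : IsOpen U) (hne : U.Nonempty)
    (h : EqOn (fun t : ℝ => ∑ j, x j * cexp (c j * t)) 0 U) : x = 0 := by
  have hpow : ∀ k : ℕ, EqOn (fun t : ℝ => ∑ j, x j * c j ^ k * cexp (c j * t)) 0 U := by
    intro k
    induction k with
    | zero => simpa using h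
    | succ k ih => simpa [pow_succ, mul_assoc] using eqOn_sum_mul_mul_cexp hU ih
  obtain ⟨t₀, ht₀⟩ := hne
  let e := Fintype.equivFin ι
  have hvan : (fun i => x (e.symm i) * cexp (c (e.symm i) * t₀)) = 0 := by
    refine eq_zero_of_forall_pow_sum_mul_pow_eq_zero (hc.comp e.symm.injective) fun k => ?_
    simp only [Function.comp_apply]
    rw [e.symm.sum_comp (fun j => x j * cexp (c j * t₀) * c j ^ (k : ℕ))]
    simpa only [mul_right_comm, Pi.zero_apply] using hpow k ht₀
  funext j
  simpa [exp_ne_zero] using congrFun hvan (e j)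

theorem memLp_two_cexp_mul_Ioi {a : ℂ} (ha : a.re < 0) :
    MemLp (fun t : ℝ => cexp (a * t)) 2 (volume.restrict (Ioi 0)) := by
  have hcont : Continuous fun t : ℝ => cexp (a * t) := by fun_prop
  refine (memLp_two_iff_integrable_sq_norm hcont.aestronglyMeasurable).2 ?_
  have hsq : (fun t : ℝ => ‖cexp (a * t)‖ ^ 2) = fun t => Real.exp (2 * a.re * t) := by
    funext t
    rw [norm_exp, sq, ← Real.exp_add]
    simp only [mul_re, ofReal_re, ofReal_im, mul_zero, sub_zero]
    ring_nf
  rw [hsq]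
  exact integrableOn_exp_mul_Ioi (by linarith) 0

theorem inner_toLp_cexp_mul_Ioi {a b : ℂ} (ha : a.re < 0) (hb : b.re < 0) :
    inner ℂ ((memLp_two_cexp_mul_Ioi ha).toLp _) ((memLp_two_cexp_mul_Ioi hb).toLp _) =
      -(conj a + b)⁻¹ := by
  have hab : (conj a + b).re < 0 := by simp only [add_re, conj_re]; linarith
  rw [L2.inner_def]
  calc _ = ∫ t in Ioi (0 : ℝ), cexp ((conj a + b) * t) := by
        refine integral_congr_ae ?_
        filter_upwards [(memLp_two_cexp_mul_Ioi ha).coeFn_toLp,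
          (memLp_two_cexp_mul_Ioi hb).coeFn_toLp] with t hat hbt
        rw [hat, hbt, RCLike.inner_apply, ← exp_conj, ← exp_add]
        simp only [map_mul, conj_ofReal]
        ring_nf
    _ = -(conj a + b)⁻¹ := by
        rw [integral_exp_mul_complex_Ioi hab 0]
        simp [div_eq_mul_inv]

theorem linearIndependent_toLp_cexp_mul_Ioi {a : ι → ℂ} (ha : ∀ i, (a i).re < 0)
    (hinj : Function.Injective a) :
    LinearIndependent ℂ fun i => (memLp_two_cexp_mul_Ioi (ha i)).toLp _ := by
  rw [Fintype.linearIndependent_iff]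
  intro g hg
  have hae : (fun t : ℝ => ∑ j, g j * cexp (a j * t)) =ᵐ[volume.restrict (Ioi 0)] 0 := by
    have hsum :=
      Lp.coeFn_finsetSum Finset.univ fun j => g j • (memLp_two_cexp_mul_Ioi (ha j)).toLp _
    have hterm : ∀ᵐ t ∂(volume.restrict (Ioi (0 : ℝ))), ∀ j,
        ((g j • (memLp_two_cexp_mul_Ioi (ha j)).toLp _ : Lp ℂ 2 _) : ℝ → ℂ) t =
          g j * cexp (a j * t) := by
      refine ae_all_iff.2 fun j => ?_
      filter_upwards [Lp.coeFn_smul (g j) ((memLp_two_cexp_mul_Ioi (ha j)).toLp _),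
        (memLp_two_cexp_mul_Ioi (ha j)).coeFn_toLp] with t hs ht
      rw [hs, Pi.smul_apply, ht, smul_eq_mul]
    rw [hg] at hsum
    filter_upwards [hsum, hterm, Lp.coeFn_zero ℂ 2 (volume.restrict (Ioi (0 : ℝ)))]
      with t hs ht hz
    rw [Finset.sum_apply] at hs
    simp only [ht] at hs
    rw [← hs, hz]
  have hzero := eq_zero_of_eqOn_sum_mul_cexp hinj isOpen_Ioi nonempty_Ioi
    (Measure.eqOn_open_of_ae_eq hae isOpen_Ioi (by fun_prop) continuousOn_const)
  exact congrFun hzero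

theorem posDef_of_inv_add_conj {w : ι → ℂ} (hw : Function.Injective w)
    (hre : ∀ i, 0 < (w i).re) :
    (of fun i j => (w i + conj (w j))⁻¹).PosDef := by
  have ha : ∀ i, (-conj (w i)).re < 0 := fun i => by simpa using hre i
  have hinj : Function.Injective fun i => -conj (w i) :=
    neg_injective.comp ((RingHom.injective _).comp hw)
  have hgram : (of fun i j => (w i + conj (w j))⁻¹) =
      gram ℂ fun i => (memLp_two_cexp_mul_Ioi (ha i)).toLp _ := by
    ext i j
    rw [of_apply, gram_apply, inner_toLp_cexp_mul_Ioi (ha i) (ha j), map_neg, conj_conj,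
      ← neg_add, inv_neg, neg_neg]
  rw [hgram]
  exact posDef_gram_of_linearIndependent (linearIndependent_toLp_cexp_mul_Ioi ha hinj)

end

theorem stmt1_general (α : ℝ) (n : ℕ) (s : Fin n → ℂ)
    (hdist : Function.Injective s) (hre : ∀ i, -α < (s i).re)
    (A : Matrix (Fin n) (Fin n) ℂ)
    (hA : ∀ i j, A i j = 1 / (2 * (Real.pi : ℂ) * (2 * (α : ℂ) + s i + conj (s j)))) :
    A.IsHermitian ∧
    ∀ x : Fin n → ℂ, x ≠ 0 →
      0 < (star x ⬝ᵥ A.mulVec x).re ∧ (star x ⬝ᵥ A.mulVec x).im = 0 := by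
  set w : Fin n → ℂ := fun i => α + s i
  have hw : Function.Injective w := fun i j h => hdist (add_left_cancel h)
  have hwre : ∀ i, 0 < (w i).re := fun i => by
    simp only [w, add_re, ofReal_re]
    linarith [hre i]
  have hAeq : A = (2 * Real.pi)⁻¹ • of fun i j => (w i + conj (w j))⁻¹ := by
    ext i j
    rw [hA, Matrix.smul_apply, of_apply, real_smul, ofReal_inv, ofReal_mul, one_div, mul_inv]
    simp only [w, map_add, conj_ofReal, ofReal_ofNat]
    ring
  have hApos : A.PosDef := hAeq ▸ (posDef_of_inv_add_conj hw hwre).smul (by positivity)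
  refine ⟨hApos.isHermitian, fun x hx => ?_⟩
  obtain ⟨hpos, him⟩ := pos_iff.1 (hApos.dotProduct_mulVec_pos hx)
  exact ⟨hpos, him.symm⟩

/-- **Strict positive definiteness of the Szegö kernel matrix** for the Hardy space
`H²(Γ_α)` on the shifted right half-plane: for pairwise distinct points `s i` with
`Re (s i) > -α`, the matrix `A i j = 1/(2π(2α + s i + conj (s j)))` is Hermitian and
`xᴴ A x` is a positive real number for every nonzero `x`. -/
theorem stmt1 (α : ℝ) (n : ℕ) (hn : 1 ≤ n) (s : Fin n → ℂ)
    (hdist : Function.Injective s) (hre : ∀ i, -α < (s i).re)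
    (A : Matrix (Fin n) (Fin n) ℂ)
    (hA : ∀ i j, A i j = 1 / (2 * (Real.pi : ℂ) * (2 * (α : ℂ) + s i + conj (s j)))) :
    A.IsHermitian ∧
    ∀ x : Fin n → ℂ, x ≠ 0 →
      0 < (star x ⬝ᵥ A.mulVec x).re ∧ (star x ⬝ᵥ A.mulVec x).im = 0 :=
  stmt1_general α n s hdist hre A hA
end

section
/- Define B : ℂ × ℂ → ℝ by B(α, β) = Re(α)·Re(β) + 4·Im(α)·Im(β). Then B is a real inner product on ℂ viewed as a two-dimensional real vector space, and there exists no complex inner product ⟪·,·⟫ on ℂ (viewed as a one-dimensional complex vector space; i.e., no Hermitian, sesquilinear, positive-definite form) such that Re ⟪α, β⟫ = B(α, β) for all α, β ∈ ℂ. -/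
open ComplexConjugate

/-- **A complex/real RKHS of real dimension two that is no real subspace of a complex
RKHS.**  `B(α,β) = Re α · Re β + 4 · Im α · Im β` is a real inner product on `ℂ` viewed
as a real vector space, but there is no complex inner product (Hermitian, sesquilinear —
linear in the first argument — positive-definite form) on `ℂ` whose real part is `B`. -/
theorem stmt4 (B : ℂ → ℂ → ℝ)
    (hB : ∀ a b, B a b = a.re * b.re + 4 * a.im * b.im) :
    ((∀ a b, B a b = B b a) ∧
     (∀ a b c, B (a + b) c = B a c + B b c) ∧
     (∀ (r : ℝ) (a b : ℂ), B (r • a) b = r * B a b) ∧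
     (∀ a, 0 ≤ B a a) ∧
     (∀ a, B a a = 0 → a = 0)) ∧
    ¬ ∃ ip : ℂ → ℂ → ℂ,
        (∀ a b c, ip (a + b) c = ip a c + ip b c) ∧
        (∀ z a b : ℂ, ip (z * a) b = z * ip a b) ∧
        (∀ a b, ip a b = conj (ip b a)) ∧
        (∀ a, a ≠ 0 → 0 < (ip a a).re) ∧
        (∀ a b, (ip a b).re = B a b) := by
  constructor
  · refine ⟨fun a b => by simp [hB]; ring, fun a b c => by simp [hB]; ring,
      fun r a b => by simp [hB]; ring, fun a => by simp only [hB]; nlinarith [sq_nonneg a.re, sq_nonneg a.im], fun a h => ?_⟩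
    rw [hB] at h
    have h1 : a.re = 0 ∧ a.im = 0 := by
      constructor <;> nlinarith [sq_nonneg a.re, sq_nonneg a.im]
    exact Complex.ext h1.1 h1.2
  · rintro ⟨ip, -, hmul, hconj, -, hre⟩
    have h1 : (ip 1 1).re = 1 := by rw [hre]; simp [hB]
    have h2 : (ip Complex.I Complex.I).re = 4 := by rw [hre]; simp [hB]
    have key : ip Complex.I Complex.I = conj (ip 1 1) := by
      have : ip Complex.I Complex.I = Complex.I * ip 1 Complex.I := by
        rw [← hmul]; norm_num
      have h3 : ip Complex.I 1 = Complex.I * ip 1 1 := by rw [← hmul]; norm_num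
      rw [this, hconj 1 Complex.I, h3, map_mul, Complex.conj_I]
      rw [show (Complex.I * (-Complex.I * (starRingEnd ℂ) (ip 1 1))) = (-(Complex.I^2)) * (starRingEnd ℂ) (ip 1 1) by ring, Complex.I_sq]
      ring
    rw [key, Complex.conj_re, h1] at h2
    norm_num at h2
end

section
/- Let (Ω, ℙ) be a probability space, n ≥ 1, and Z : Ω → (Fin n → ℂ) a random vector whose components Zᵢ are square-integrable with E[Zᵢ] = 0 for all i. Let K be the covariance matrix, K i j := E[Zᵢ · conj(Zⱼ)], and C the pseudo-covariance matrix, C i j := E[Zᵢ · Zⱼ]. Then: (i) K is Hermitian and positive semidefinite (xᴴ K x is real and ≥ 0 for all x ∈ ℂⁿ); (ii) C is symmetric (C i j = C j i); (iii) for every u ∈ ℂⁿ, if K·u = 0 then (conj C)·u = 0, where conj C denotes the entrywise complex conjugate of C. -/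
/-!
Both `K` and `C` are matrices of second moments `E[Fᵢ Gⱼ]`, and such a matrix acts on a vector
by `(M u)ᵢ = E[Fᵢ · (G ⬝ᵥ u)]`. Hence `xᴴ K x = E|xᴴ Z|² ≥ 0`. If `K u = 0`, then
`E|uᴴ Z|² = 0`, so `uᴴ Z = 0` almost surely, and `(conj C · u)ᵢ = E[conj Zᵢ · conj (uᴴ Z)] = 0`.
-/

open MeasureTheory Matrix ComplexConjugate

namespace MeasureTheory

variable {Ω ι : Type*} [MeasurableSpace Ω] {μ : Measure Ω}

noncomputable def crossMoment (μ : Measure Ω) (F G : Ω → ι → ℂ) : Matrix ι ι ℂ :=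
  of fun i j => ∫ ω, F ω i * G ω j ∂μ

lemma crossMoment_transpose (F G : Ω → ι → ℂ) :
    (crossMoment μ F G)ᵀ = crossMoment μ G F := by
  ext i j
  simp only [crossMoment, transpose_apply, of_apply, mul_comm]

lemma crossMoment_map_conj (F G : Ω → ι → ℂ) :
    (crossMoment μ F G).map (starRingEnd ℂ) = crossMoment μ (star F) (star G) := by
  ext i j
  simp only [crossMoment, map_apply, of_apply, ← integral_conj, map_mul]
  rfl

lemma crossMoment_conjTranspose (F G : Ω → ι → ℂ) :
    (crossMoment μ F G)ᴴ = crossMoment μ (star G) (star F) := by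
  rw [conjTranspose, crossMoment_transpose]
  exact crossMoment_map_conj G F

variable [Fintype ι]

lemma memLp_dotProduct_const {p : ENNReal} {G : Ω → ι → ℂ}
    (hG : ∀ j, MemLp (fun ω => G ω j) p μ) (u : ι → ℂ) :
    MemLp (fun ω => G ω ⬝ᵥ u) p μ :=
  memLp_finsetSum _ fun j _ => (hG j).mul_const (u j)

lemma dotProduct_integral {f : Ω → ι → ℂ} (hf : ∀ i, Integrable (fun ω => f ω i) μ)
    (v : ι → ℂ) : v ⬝ᵥ (fun i => ∫ ω, f ω i ∂μ) = ∫ ω, v ⬝ᵥ f ω ∂μ := by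
  simp only [dotProduct, ← integral_const_mul]
  exact (integral_finsetSum _ fun i _ => (hf i).const_mul (v i)).symm

lemma crossMoment_mulVec {F G : Ω → ι → ℂ} (hF : ∀ i, MemLp (fun ω => F ω i) 2 μ)
    (hG : ∀ j, MemLp (fun ω => G ω j) 2 μ) (u : ι → ℂ) :
    crossMoment μ F G *ᵥ u = fun i => ∫ ω, F ω i * (G ω ⬝ᵥ u) ∂μ := by
  ext i
  rw [mulVec, dotProduct_comm]
  refine (dotProduct_integral (fun j => (hF i).integrable_mul (hG j)) u).trans ?_
  simp only [dotProduct_comm u, ← smul_eq_mul (a := F _ i), ← smul_dotProduct]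
  rfl

lemma star_dotProduct_crossMoment_star_mulVec {Z : Ω → ι → ℂ}
    (hZ : ∀ i, MemLp (fun ω => Z ω i) 2 μ) (x : ι → ℂ) :
    star x ⬝ᵥ crossMoment μ Z (star Z) *ᵥ x
      = ((∫ ω, ‖star x ⬝ᵥ Z ω‖ ^ 2 ∂μ : ℝ) : ℂ) := by
  have hZstar : ∀ j, MemLp (fun ω => star Z ω j) 2 μ := fun j => (hZ j).star
  rw [crossMoment_mulVec hZ hZstar, dotProduct_integral (f := fun ω i => Z ω i * (star Z ω ⬝ᵥ x))
    fun i => (hZ i).integrable_mul (memLp_dotProduct_const hZstar x),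
    ← integral_complex_ofReal]
  congr 1
  ext ω
  calc star x ⬝ᵥ (fun i => Z ω i * (star (Z ω) ⬝ᵥ x))
      = (star x ⬝ᵥ Z ω) * star (star x ⬝ᵥ Z ω) := by
        rw [← star_dotProduct]
        simp only [dotProduct, Finset.sum_mul, mul_assoc]
    _ = _ := by rw [Complex.star_def, Complex.mul_conj']; push_cast; rfl

lemma crossMoment_star_mulVec_eq_zero_of_crossMoment_mulVec_eq_zero {Z : Ω → ι → ℂ}
    (hZ : ∀ i, MemLp (fun ω => Z ω i) 2 μ) {u : ι → ℂ}
    (hu : crossMoment μ Z (star Z) *ᵥ u = 0) :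
    crossMoment μ (star Z) (star Z) *ᵥ u = 0 := by
  have hZstar : ∀ j, MemLp (fun ω => star Z ω j) 2 μ := fun j => (hZ j).star
  have hS : MemLp (fun ω => star u ⬝ᵥ Z ω) 2 μ := by
    simpa only [dotProduct_comm] using memLp_dotProduct_const hZ (star u)
  have hnorm : ∫ ω, ‖star u ⬝ᵥ Z ω‖ ^ 2 ∂μ = 0 := by
    have := star_dotProduct_crossMoment_star_mulVec hZ u
    rw [hu, dotProduct_zero] at this
    exact_mod_cast this.symm
  have hS_ae : ∀ᵐ ω ∂μ, star u ⬝ᵥ Z ω = 0 := by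
    filter_upwards [(integral_eq_zero_iff_of_nonneg (fun ω => sq_nonneg _)
      ((memLp_two_iff_integrable_sq_norm hS.1).mp hS)).mp hnorm] with ω hω
    simpa using hω
  rw [crossMoment_mulVec hZstar hZstar]
  ext i
  refine integral_eq_zero_of_ae ?_
  filter_upwards [hS_ae] with ω hω
  rw [Pi.zero_apply, Pi.star_apply, star_dotProduct, hω, star_zero, mul_zero]

end MeasureTheory

theorem stmt6_general {Ω : Type*} [MeasurableSpace Ω] (ℙ : Measure Ω)
    (n : ℕ) (Z : Ω → Fin n → ℂ)
    (hL2 : ∀ i, MemLp (fun ω => Z ω i) 2 ℙ)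
    (K C : Matrix (Fin n) (Fin n) ℂ)
    (hK : ∀ i j, K i j = ∫ ω, Z ω i * conj (Z ω j) ∂ℙ)
    (hC : ∀ i j, C i j = ∫ ω, Z ω i * Z ω j ∂ℙ) :
    (K.IsHermitian ∧
      ∀ x : Fin n → ℂ,
        0 ≤ (star x ⬝ᵥ K.mulVec x).re ∧ (star x ⬝ᵥ K.mulVec x).im = 0) ∧
    (∀ i j, C i j = C j i) ∧
    (∀ u : Fin n → ℂ, K.mulVec u = 0 → (C.map (starRingEnd ℂ)).mulVec u = 0) := by
  obtain rfl : K = crossMoment ℙ Z (star Z) := ext hK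
  obtain rfl : C = crossMoment ℙ Z Z := ext hC
  refine ⟨⟨?_, fun x => ?_⟩, fun i j => ?_, fun u hu => ?_⟩
  · rw [IsHermitian, crossMoment_conjTranspose, star_star]
  · rw [star_dotProduct_crossMoment_star_mulVec hL2, Complex.ofReal_re, Complex.ofReal_im]
    exact ⟨integral_nonneg fun ω => sq_nonneg _, rfl⟩
  · rw [← transpose_apply (crossMoment ℙ Z Z), crossMoment_transpose]
  · rw [crossMoment_map_conj]
    exact crossMoment_star_mulVec_eq_zero_of_crossMoment_mulVec_eq_zero hL2 hu

/-- **Necessary conditions on the covariance/pseudo-covariance pair of a zero-mean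
complex random vector.**  (i) the covariance matrix `K` is Hermitian and positive
semidefinite (`xᴴ K x` is real and `≥ 0`); (ii) the pseudo-covariance matrix `C` is
symmetric; (iii) `K u = 0` implies `(conj C) u = 0`. -/
theorem stmt6 {Ω : Type*} [MeasurableSpace Ω] (ℙ : Measure Ω) [IsProbabilityMeasure ℙ]
    (n : ℕ) (hn : 1 ≤ n) (Z : Ω → Fin n → ℂ)
    (hL2 : ∀ i, MemLp (fun ω => Z ω i) 2 ℙ)
    (hmean : ∀ i, ∫ ω, Z ω i ∂ℙ = 0)
    (K C : Matrix (Fin n) (Fin n) ℂ)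
    (hK : ∀ i j, K i j = ∫ ω, Z ω i * conj (Z ω j) ∂ℙ)
    (hC : ∀ i j, C i j = ∫ ω, Z ω i * Z ω j ∂ℙ) :
    (K.IsHermitian ∧
      ∀ x : Fin n → ℂ,
        0 ≤ (star x ⬝ᵥ K.mulVec x).re ∧ (star x ⬝ᵥ K.mulVec x).im = 0) ∧
    (∀ i j, C i j = C j i) ∧
    (∀ u : Fin n → ℂ, K.mulVec u = 0 → (C.map (starRingEnd ℂ)).mulVec u = 0) :=
  stmt6_general ℙ n Z hL2 K C hK hC
end

section
/- Let (Ω, ℙ) be a probability space, n ≥ 1, and Z : Ω → (Fin n → ℂ) a random vector whose components Zᵢ are square-integrable with E[Zᵢ] = 0 for all i. Let K i j := E[Zᵢ · conj(Zⱼ)] and C i j := E[Zᵢ · Zⱼ]. If the matrix K is invertible, then the matrix conj(K) − Cᴴ · K⁻¹ · C is positive semidefinite, where conj(K) denotes the entrywise complex conjugate of K and Cᴴ the conjugate transpose of C. -/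
/-!
The augmented vector `(Z, conj Z)` has covariance matrix `[[K, C], [Cᴴ, conj K]]`, which is
positive semidefinite because it is a Gram matrix in `L²`. The block `K` is positive semidefinite
for the same reason and invertible, hence positive definite, so the Schur complement
`conj K - Cᴴ K⁻¹ C` of the block matrix is positive semidefinite.
-/

open MeasureTheory Matrix ComplexConjugate

open scoped ComplexOrder

section Covariance

variable {Ω ι 𝕜 : Type*} [MeasurableSpace Ω] [RCLike 𝕜]

noncomputable def covarianceMatrix (μ : Measure Ω) (Z : Ω → ι → 𝕜) : Matrix ι ι 𝕜 :=
  of fun i j => ∫ ω, Z ω i * conj (Z ω j) ∂μ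

noncomputable def pseudoCovarianceMatrix (μ : Measure Ω) (Z : Ω → ι → 𝕜) : Matrix ι ι 𝕜 :=
  of fun i j => ∫ ω, Z ω i * Z ω j ∂μ

theorem posSemidef_covarianceMatrix [Finite ι] (μ : Measure Ω) {Z : Ω → ι → 𝕜}
    (hZ : ∀ i, MemLp (fun ω => Z ω i) 2 μ) : (covarianceMatrix μ Z).PosSemidef := by
  -- `∫ Zᵢ conj Zⱼ` is the `L²` inner product of `conj Zᵢ` and `conj Zⱼ`
  convert posSemidef_gram 𝕜 fun i => (hZ i).star.toLp
  ext i j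
  rw [gram_apply, L2.inner_def, covarianceMatrix, of_apply]
  refine integral_congr_ae ?_
  filter_upwards [(hZ i).star.coeFn_toLp, (hZ j).star.coeFn_toLp] with ω hi hj
  rw [hi, hj, Pi.star_apply, Pi.star_apply, RCLike.star_def, RCLike.inner_apply,
    RCLike.conj_conj, mul_comm]

theorem covarianceMatrix_sumElim_conj (μ : Measure Ω) (Z : Ω → ι → 𝕜) :
    covarianceMatrix μ (fun ω => Sum.elim (Z ω) (conj (Z ω))) =
      fromBlocks (covarianceMatrix μ Z) (pseudoCovarianceMatrix μ Z)
        (pseudoCovarianceMatrix μ Z)ᴴ ((covarianceMatrix μ Z).map conj) := by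
  ext (i | i) (j | j) <;>
    simp [covarianceMatrix, pseudoCovarianceMatrix, ← integral_conj, mul_comm]

theorem posSemidef_conj_covarianceMatrix_sub_schur [Fintype ι] [DecidableEq ι]
    (μ : Measure Ω) {Z : Ω → ι → 𝕜} (hZ : ∀ i, MemLp (fun ω => Z ω i) 2 μ)
    (hdet : IsUnit (covarianceMatrix μ Z).det) :
    ((covarianceMatrix μ Z).map conj -
      (pseudoCovarianceMatrix μ Z)ᴴ * (covarianceMatrix μ Z)⁻¹ *
        pseudoCovarianceMatrix μ Z).PosSemidef := by
  have hK : (covarianceMatrix μ Z).PosDef :=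
    (posSemidef_covarianceMatrix μ hZ).posDef_iff_isUnit.mpr
      ((isUnit_iff_isUnit_det _).mpr hdet)
  have hAug : (fromBlocks (covarianceMatrix μ Z) (pseudoCovarianceMatrix μ Z)
      (pseudoCovarianceMatrix μ Z)ᴴ ((covarianceMatrix μ Z).map conj)).PosSemidef := by
    rw [← covarianceMatrix_sumElim_conj]
    exact posSemidef_covarianceMatrix μ <| Sum.rec hZ fun i => (hZ i).star
  have := invertibleOfIsUnitDet _ hdet
  exact (hK.fromBlocks₁₁ _ _).mp hAug

end Covariance

theorem stmt7_general {Ω : Type*} [MeasurableSpace Ω] (ℙ : Measure Ω)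
    (n : ℕ) (Z : Ω → Fin n → ℂ)
    (hL2 : ∀ i, MemLp (fun ω => Z ω i) 2 ℙ)
    (K C : Matrix (Fin n) (Fin n) ℂ)
    (hK : ∀ i j, K i j = ∫ ω, Z ω i * conj (Z ω j) ∂ℙ)
    (hC : ∀ i j, C i j = ∫ ω, Z ω i * Z ω j ∂ℙ)
    (hKinv : IsUnit K.det) :
    ∀ x : Fin n → ℂ,
      0 ≤ (star x ⬝ᵥ (K.map (starRingEnd ℂ) - C.conjTranspose * K⁻¹ * C).mulVec x).re ∧
      (star x ⬝ᵥ (K.map (starRingEnd ℂ) - C.conjTranspose * K⁻¹ * C).mulVec x).im = 0 := by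
  obtain rfl : K = covarianceMatrix ℙ Z := ext hK
  obtain rfl : C = pseudoCovarianceMatrix ℙ Z := ext hC
  intro x
  have hnonneg :=
    (posSemidef_conj_covarianceMatrix_sub_schur ℙ hL2 hKinv).dotProduct_mulVec_nonneg x
  exact (Complex.nonneg_iff.mp hnonneg).imp_right Eq.symm

/-- **Picinbono's necessary condition** on the covariance/pseudo-covariance pair of a
zero-mean complex random vector: if the covariance matrix `K` is invertible, then
`conj K − Cᴴ K⁻¹ C` is positive semidefinite (`xᴴ M x` is real and nonnegative). -/
theorem stmt7 {Ω : Type*} [MeasurableSpace Ω] (ℙ : Measure Ω) [IsProbabilityMeasure ℙ]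
    (n : ℕ) (hn : 1 ≤ n) (Z : Ω → Fin n → ℂ)
    (hL2 : ∀ i, MemLp (fun ω => Z ω i) 2 ℙ)
    (hmean : ∀ i, ∫ ω, Z ω i ∂ℙ = 0)
    (K C : Matrix (Fin n) (Fin n) ℂ)
    (hK : ∀ i j, K i j = ∫ ω, Z ω i * conj (Z ω j) ∂ℙ)
    (hC : ∀ i j, C i j = ∫ ω, Z ω i * Z ω j ∂ℙ)
    (hKinv : IsUnit K.det) :
    ∀ x : Fin n → ℂ,
      0 ≤ (star x ⬝ᵥ (K.map (starRingEnd ℂ) - C.conjTranspose * K⁻¹ * C).mulVec x).re ∧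
      (star x ⬝ᵥ (K.map (starRingEnd ℂ) - C.conjTranspose * K⁻¹ * C).mulVec x).im = 0 :=
  stmt7_general ℙ n Z hL2 K C hK hC hKinv
end

section
/- Let S be a nonempty set, H a real Hilbert space, and Φ_re, Φ_im : S → H. Define the evaluation map ev : H → (S → ℂ) by ev f s := ⟪f, Φ_re s⟫_H + i·⟪f, Φ_im s⟫_H, the complex kernel k(s,s₀) := ev (Φ_re s₀) s − i·ev (Φ_im s₀) s, and the pseudo-kernel c(s,s₀) := ev (Φ_re s₀) s + i·ev (Φ_im s₀) s. Let n ≥ 1, s₁,…,sₙ ∈ S, y ∈ ℂⁿ, and let K, C be the n×n matrices K_{ij} = k(sᵢ,sⱼ), C_{ij} = c(sᵢ,sⱼ). Then there exists g ∈ H with ev g sᵢ = yᵢ for all i if and only if there exists γ ∈ ℂⁿ with K·γ + C·conj(γ) = y. Moreover, for any such γ, the element g₀ := Σⱼ (2·Re(γⱼ)·Φ_re sⱼ + 2·Im(γⱼ)·Φ_im sⱼ) — whose ev-image is the function Σⱼ γⱼ·k(·,sⱼ) + conj(γⱼ)·c(·,sⱼ) — satisfies ev g₀ sᵢ = yᵢ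 for all i, and for every h ∈ H with ev h sᵢ = yᵢ for all i one has ‖g₀‖ ≤ ‖h‖, with equality only if h = g₀. -/
/-!
Evaluation at a node `t` only sees the two real inner products with `Φre t` and `Φim t`, so
interpolating the data means prescribing the inner products with the `2n` vectors
`Φre (s i), Φim (s i)`. Orthogonal projection of any interpolant onto their span `V` is again an
interpolant, and the elements of `V` are exactly the combinations `g₀(γ)`, whose values at the
nodes are the entries of `K γ + C (conj γ)`. An interpolant `h` differs from `g₀ ∈ V` by a vector
orthogonal to `V`, so `‖h‖² = ‖g₀‖² + ‖h - g₀‖²`.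
-/

open Matrix ComplexConjugate

section MinimumNorm

variable {H : Type*} [NormedAddCommGroup H] [InnerProductSpace ℝ H] {ι : Type*}

theorem norm_le_of_mem_span_of_inner_eq {v : ι → H} {g₀ h : H}
    (hg₀ : g₀ ∈ Submodule.span ℝ (Set.range v))
    (hh : ∀ i, inner ℝ h (v i) = inner ℝ g₀ (v i)) :
    ‖g₀‖ ≤ ‖h‖ ∧ (‖g₀‖ = ‖h‖ → h = g₀) := by
  have hspan : Submodule.span ℝ (Set.range v) ≤ LinearMap.ker (innerₛₗ ℝ (h - g₀)) :=
    Submodule.span_le.2 <| Set.range_subset_iff.2 fun i => by simp [hh i]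
  have horth : inner ℝ g₀ (h - g₀) = 0 := by
    rw [real_inner_comm]; exact hspan hg₀
  have hpyth : ‖h‖ * ‖h‖ = ‖g₀‖ * ‖g₀‖ + ‖h - g₀‖ * ‖h - g₀‖ := by
    simpa using norm_add_sq_eq_norm_sq_add_norm_sq_real horth
  refine ⟨?_, fun heq => ?_⟩
  · rw [mul_self_le_mul_self_iff (norm_nonneg _) (norm_nonneg _), hpyth]
    exact le_add_of_nonneg_right (mul_self_nonneg _)
  · rw [heq, left_eq_add, mul_self_eq_zero, norm_sub_eq_zero_iff] at hpyth
    exact hpyth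

theorem exists_mem_span_inner_eq [Finite ι] (v : ι → H) (g : H) :
    ∃ p ∈ Submodule.span ℝ (Set.range v), ∀ i, inner ℝ p (v i) = inner ℝ g (v i) := by
  set V := Submodule.span ℝ (Set.range v)
  have : FiniteDimensional ℝ V := FiniteDimensional.span_of_finite ℝ (Set.finite_range v)
  refine ⟨V.starProjection g, V.starProjection_apply_mem g, fun i => ?_⟩
  rw [Submodule.inner_starProjection_left_eq_right,
    V.starProjection_eq_self_iff.2 (Submodule.subset_span ⟨i, rfl⟩)]

end MinimumNorm

theorem LinearMap.map_re_smul_add_im_smul {M : Type*} [AddCommGroup M] [Module ℝ M]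
    (E : M →ₗ[ℝ] ℂ) (γ : ℂ) (u v : M) :
    E ((2 * γ.re) • u + (2 * γ.im) • v) =
      γ * (E u - Complex.I * E v) + conj γ * (E u + Complex.I * E v) := by
  rw [map_add, map_smul, map_smul, Complex.real_smul, Complex.real_smul]
  -- `γ + conj γ = 2 Re γ` and `γ - conj γ = 2 i Im γ`
  linear_combination (norm := (push_cast; ring))
    -E u * Complex.add_conj γ + Complex.I * E v * Complex.sub_conj γ +
      2 * γ.im * E v * Complex.I_sq

section ReImCombination

variable {M : Type*} [AddCommGroup M] [Module ℝ M] {ι : Type*} [Fintype ι]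

def reImCombination (u v : ι → M) (γ : ι → ℂ) : M :=
  ∑ j, ((2 * (γ j).re) • u j + (2 * (γ j).im) • v j)

theorem mem_span_range_sumElim_iff (u v : ι → M) {p : M} :
    p ∈ Submodule.span ℝ (Set.range (Sum.elim u v)) ↔ ∃ γ, reImCombination u v γ = p := by
  rw [Submodule.mem_span_range_iff_exists_fun]
  constructor
  · rintro ⟨a, rfl⟩
    refine ⟨fun j => ⟨a (Sum.inl j) / 2, a (Sum.inr j) / 2⟩, ?_⟩
    simp [Fintype.sum_sum_type, reImCombination, Finset.sum_add_distrib, mul_div_cancel₀]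
  · rintro ⟨γ, rfl⟩
    refine ⟨Sum.elim (fun j => 2 * (γ j).re) (fun j => 2 * (γ j).im), ?_⟩
    simp [Fintype.sum_sum_type, reImCombination, Finset.sum_add_distrib]

theorem LinearMap.map_reImCombination (E : M →ₗ[ℝ] ℂ) (u v : ι → M) (γ : ι → ℂ) :
    E (reImCombination u v γ) =
      ∑ j, (γ j * (E (u j) - Complex.I * E (v j)) +
        conj (γ j) * (E (u j) + Complex.I * E (v j))) := by
  simp only [reImCombination, map_sum, E.map_re_smul_add_im_smul]

end ReImCombination

section ComplexEval

variable {S H : Type*} [NormedAddCommGroup H] [InnerProductSpace ℝ H] (Φre Φim : S → H)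

def complexEval (t : S) : H →ₗ[ℝ] ℂ where
  toFun f := (inner ℝ f (Φre t) : ℂ) + (inner ℝ f (Φim t) : ℂ) * Complex.I
  map_add' f g := by simp only [inner_add_left]; push_cast; ring
  map_smul' r f := by
    simp only [real_inner_smul_left, Complex.real_smul, RingHom.id_apply]; push_cast; ring

theorem complexEval_eq_complexEval_iff {t : S} {f g : H} :
    complexEval Φre Φim t f = complexEval Φre Φim t g ↔
      inner ℝ f (Φre t) = inner ℝ g (Φre t) ∧
        inner ℝ f (Φim t) = inner ℝ g (Φim t) := by
  simp [complexEval, Complex.ext_iff]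

theorem forall_complexEval_eq_iff {ι : Type*} (s : ι → S) {f g : H} :
    (∀ i, complexEval Φre Φim (s i) f = complexEval Φre Φim (s i) g) ↔
      ∀ j, inner ℝ f (Sum.elim (Φre ∘ s) (Φim ∘ s) j) =
        inner ℝ g (Sum.elim (Φre ∘ s) (Φim ∘ s) j) := by
  simp [complexEval_eq_complexEval_iff, forall_and, Sum.forall]

end ComplexEval

theorem stmt11_general {S : Type*} {H : Type*} [NormedAddCommGroup H]
    [InnerProductSpace ℝ H] (Φre Φim : S → H)
    (ev : H → S → ℂ)
    (hev : ∀ f s, ev f s =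
      ((inner ℝ f (Φre s) : ℝ) : ℂ) + ((inner ℝ f (Φim s) : ℝ) : ℂ) * Complex.I)
    (k c : S → S → ℂ)
    (hk : ∀ s s₀, k s s₀ = ev (Φre s₀) s - Complex.I * ev (Φim s₀) s)
    (hc : ∀ s s₀, c s s₀ = ev (Φre s₀) s + Complex.I * ev (Φim s₀) s)
    (n : ℕ) (s : Fin n → S) (y : Fin n → ℂ)
    (K C : Matrix (Fin n) (Fin n) ℂ)
    (hK : ∀ i j, K i j = k (s i) (s j)) (hC : ∀ i j, C i j = c (s i) (s j)) :
    ((∃ g : H, ∀ i, ev g (s i) = y i) ↔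
      ∃ γ : Fin n → ℂ, K.mulVec γ + C.mulVec (fun j => conj (γ j)) = y) ∧
    ∀ γ : Fin n → ℂ, K.mulVec γ + C.mulVec (fun j => conj (γ j)) = y →
      ∀ g₀ : H,
        g₀ = ∑ j, ((2 * (γ j).re) • Φre (s j) + (2 * (γ j).im) • Φim (s j)) →
        (∀ t, ev g₀ t = ∑ j, (γ j * k t (s j) + conj (γ j) * c t (s j))) ∧
        (∀ i, ev g₀ (s i) = y i) ∧
        ∀ h : H, (∀ i, ev h (s i) = y i) →
          ‖g₀‖ ≤ ‖h‖ ∧ (‖g₀‖ = ‖h‖ → h = g₀) := by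
  obtain rfl : ev = fun f t => complexEval Φre Φim t f := funext₂ hev
  have hexpand (γ : Fin n → ℂ) (t : S) :
      complexEval Φre Φim t (reImCombination (Φre ∘ s) (Φim ∘ s) γ) =
        ∑ j, (γ j * k t (s j) + conj (γ j) * c t (s j)) := by
    simp only [LinearMap.map_reImCombination, Function.comp_apply, hk, hc]
  have hsystem (γ : Fin n → ℂ) : K.mulVec γ + C.mulVec (fun j => conj (γ j)) =
      fun i => complexEval Φre Φim (s i) (reImCombination (Φre ∘ s) (Φim ∘ s) γ) := by
    ext i
    simp only [hexpand, Pi.add_apply, mulVec, dotProduct, hK, hC, ← Finset.sum_add_distrib]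
    exact Finset.sum_congr rfl fun j _ => by ring
  refine ⟨⟨fun ⟨g, hg⟩ => ?_,
    fun ⟨γ, hγ⟩ => ⟨_, funext_iff.1 ((hsystem γ).symm.trans hγ)⟩⟩, ?_⟩
  · obtain ⟨p, hp, hpg⟩ := exists_mem_span_inner_eq (Sum.elim (Φre ∘ s) (Φim ∘ s)) g
    obtain ⟨γ, rfl⟩ := (mem_span_range_sumElim_iff _ _).1 hp
    exact ⟨γ, (hsystem γ).trans (funext fun i =>
      ((forall_complexEval_eq_iff Φre Φim s).2 hpg i).trans (hg i))⟩
  · rintro γ hγ g₀ rfl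
    have hinterp := funext_iff.1 ((hsystem γ).symm.trans hγ)
    refine ⟨hexpand γ, hinterp, fun h hh => norm_le_of_mem_span_of_inner_eq
      ((mem_span_range_sumElim_iff _ _).2 ⟨γ, rfl⟩)
      ((forall_complexEval_eq_iff Φre Φim s).1 fun i => (hh i).trans (hinterp i).symm)⟩

/-- **Minimum-norm interpolation in a complex/real RKHS.**  `H` is a real Hilbert space
of ℂ-valued functions on `S` via `ev f s = ⟪f, Φre s⟫ + i ⟪f, Φim s⟫`; the complex
kernel is `k(s,s₀) = ev (Φre s₀) s − i · ev (Φim s₀) s` and the pseudo-kernel is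
`c(s,s₀) = ev (Φre s₀) s + i · ev (Φim s₀) s`.  Interpolation data `(s i, y i)` can be
matched by some `g ∈ H` iff the system `K γ + C (conj γ) = y` is solvable; for any
solution `γ`, `g₀ = ∑ j (2 Re γⱼ) Φre sⱼ + (2 Im γⱼ) Φim sⱼ` — whose `ev`-image is
`∑ⱼ γⱼ k(·,sⱼ) + conj γⱼ c(·,sⱼ)` — is the unique minimum-norm interpolant. -/
theorem stmt11 {S : Type*} [Nonempty S] {H : Type*} [NormedAddCommGroup H]
    [InnerProductSpace ℝ H] [CompleteSpace H] (Φre Φim : S → H)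
    (ev : H → S → ℂ)
    (hev : ∀ f s, ev f s =
      ((inner ℝ f (Φre s) : ℝ) : ℂ) + ((inner ℝ f (Φim s) : ℝ) : ℂ) * Complex.I)
    (k c : S → S → ℂ)
    (hk : ∀ s s₀, k s s₀ = ev (Φre s₀) s - Complex.I * ev (Φim s₀) s)
    (hc : ∀ s s₀, c s s₀ = ev (Φre s₀) s + Complex.I * ev (Φim s₀) s)
    (n : ℕ) (hn : 1 ≤ n) (s : Fin n → S) (y : Fin n → ℂ)
    (K C : Matrix (Fin n) (Fin n) ℂ)
    (hK : ∀ i j, K i j = k (s i) (s j)) (hC : ∀ i j, C i j = c (s i) (s j)) :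
    ((∃ g : H, ∀ i, ev g (s i) = y i) ↔
      ∃ γ : Fin n → ℂ, K.mulVec γ + C.mulVec (fun j => conj (γ j)) = y) ∧
    ∀ γ : Fin n → ℂ, K.mulVec γ + C.mulVec (fun j => conj (γ j)) = y →
      ∀ g₀ : H,
        g₀ = ∑ j, ((2 * (γ j).re) • Φre (s j) + (2 * (γ j).im) • Φim (s j)) →
        (∀ t, ev g₀ t = ∑ j, (γ j * k t (s j) + conj (γ j) * c t (s j))) ∧
        (∀ i, ev g₀ (s i) = y i) ∧
        ∀ h : H, (∀ i, ev h (s i) = y i) →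
          ‖g₀‖ ≤ ‖h‖ ∧ (‖g₀‖ = ‖h‖ → h = g₀) :=
  stmt11_general Φre Φim ev hev k c hk hc n s y K C hK hC
end

section
/- Let S be a nonempty set equipped with an involution σ : S → S (σ ∘ σ = id). Let k : S × S → ℂ be Hermitian (k(s,s₀) = conj(k(s₀,s)) for all s, s₀), strictly positive definite (for every finite family of pairwise distinct points of S, the corresponding kernel matrix is positive definite, hence invertible), and satisfy k(s, σ s₀) = k(s₀, σ s) for all s, s₀ ∈ S. Let s₁,…,sₙ ∈ S be pairwise distinct, y ∈ ℂⁿ, and define the n×n matrices K_{ij} = k(sᵢ,sⱼ) and C_{ij} = k(sᵢ, σ sⱼ). Then the system K·γ + C·conj(γ) = y has a solution γ ∈ ℂⁿ if and only if yⱼ = conj(yᵢ) for all i, j such that sⱼ = σ(sᵢ). When this condition holds, there is exactly one solution γ ∈ ℂⁿ such that γᵢ = conj(γⱼ) for all i, j with sⱼ = σ(sᵢ). -/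
open Matrix ComplexConjugate

lemma lemA {S : Type*} (σ : S → S) (hσ : ∀ a, σ (σ a) = a)
    (k : S → S → ℂ)
    (hherm : ∀ a b, k a b = conj (k b a))
    (hsym : ∀ a b, k a (σ b) = k b (σ a))
    {n : ℕ} (s : Fin n → S)
    (K C : Matrix (Fin n) (Fin n) ℂ)
    (hK : ∀ i j, K i j = k (s i) (s j))
    (hC : ∀ i j, C i j = k (s i) (σ (s j)))
    (γ : Fin n → ℂ) (i j : Fin n) (hij : s j = σ (s i)) :
    (K.mulVec γ + C.mulVec (fun l => conj (γ l))) j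
      = conj ((K.mulVec γ + C.mulVec (fun l => conj (γ l))) i) := by
  have hsi : s i = σ (s j) := by rw [hij, hσ]
  have hKC : ∀ l, conj (K i l) = C j l := by
    intro l
    rw [hK, hC, ← hherm, hsi, hsym]
  have hCK : ∀ l, conj (C i l) = K j l := by
    intro l
    rw [hK, hC, ← hherm, hij]
    conv_rhs => rw [← hσ (s l)]
    rw [hsym, hσ]
  simp only [Pi.add_apply, mulVec, dotProduct, map_add, map_sum]
  rw [add_comm]
  congr 1
  · refine Finset.sum_congr rfl fun l _ => ?_
    rw [_root_.map_mul, hKC]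
  · refine Finset.sum_congr rfl fun l _ => ?_
    rw [_root_.map_mul, hCK, Complex.conj_conj]


lemma lemB {S : Type*} (σ : S → S) (hσ : ∀ a, σ (σ a) = a)
    (k : S → S → ℂ)
    (hherm : ∀ a b, k a b = conj (k b a))
    (hspd : ∀ (N : ℕ) (t : Fin N → S), Function.Injective t →
      ∀ x : Fin N → ℂ, x ≠ 0 →
        0 < (star x ⬝ᵥ (Matrix.of fun i j => k (t i) (t j)).mulVec x).re ∧
        (star x ⬝ᵥ (Matrix.of fun i j => k (t i) (t j)).mulVec x).im = 0)
    (hsym : ∀ a b, k a (σ b) = k b (σ a))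
    {n : ℕ} (s : Fin n → S) (hdist : Function.Injective s)
    (K C : Matrix (Fin n) (Fin n) ℂ)
    (hK : ∀ i j, K i j = k (s i) (s j))
    (hC : ∀ i j, C i j = k (s i) (σ (s j)))
    (γ : Fin n → ℂ) (hγ : ∀ i j, s j = σ (s i) → γ i = conj (γ j))
    (h0 : K.mulVec γ + C.mulVec (fun l => conj (γ l)) = 0) : γ = 0 := by
  classical
  set f : S → ℂ := fun u => ∑ l, (γ l * k u (s l) + conj (γ l) * k u (σ (s l))) with hf
  -- f vanishes on the s j
  have hfs : ∀ j, f (s j) = 0 := by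
    intro j
    have h0j := congrFun h0 j
    simp only [Pi.add_apply, Pi.zero_apply, mulVec, dotProduct] at h0j
    rw [hf]
    simp only
    rw [Finset.sum_add_distrib]
    rw [← h0j]
    congr 1
    · exact Finset.sum_congr rfl fun l _ => by rw [hK, mul_comm]
    · exact Finset.sum_congr rfl fun l _ => by rw [hC, mul_comm]
  -- symmetry of f
  have hfσ : ∀ u, f (σ u) = conj (f u) := by
    intro u
    rw [hf]
    simp only [map_sum, map_add, _root_.map_mul, Complex.conj_conj]
    refine Finset.sum_congr rfl fun l _ => ?_
    have h1 : k (σ u) (s l) = conj (k u (σ (s l))) := by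
      conv_lhs => rw [← hσ (s l)]
      rw [hsym, hσ, hherm]
    have h2 : k (σ u) (σ (s l)) = conj (k u (s l)) := by
      rw [hsym, hσ, hherm]
    rw [h1, h2]
    ring
  -- the finite set of all points
  let A : Finset S := Finset.image s Finset.univ ∪ Finset.image (σ ∘ s) Finset.univ
  have hfA : ∀ u ∈ A, f u = 0 := by
    intro u hu
    rcases Finset.mem_union.mp hu with h | h
    · obtain ⟨j, _, hj⟩ := Finset.mem_image.mp h
      rw [← hj]; exact hfs j
    · obtain ⟨j, _, hj⟩ := Finset.mem_image.mp h
      rw [← hj]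
      show f (σ (s j)) = 0
      rw [hfσ, hfs j, map_zero]
  set N := A.card with hN
  let e : A ≃ Fin N := A.equivFin
  let t : Fin N → S := fun m => (e.symm m : S)
  have ht : Function.Injective t := fun a b hab => by
    have : e.symm a = e.symm b := Subtype.ext hab
    exact e.symm.injective this
  have htA : ∀ m, t m ∈ A := fun m => (e.symm m).2
  have hmem : ∀ u ∈ A, ∃ m, t m = u := by
    intro u hu
    exact ⟨e ⟨u, hu⟩, by simp [t]⟩
  set x : Fin N → ℂ := fun m =>
    ∑ l, ((if s l = t m then γ l else 0) + (if σ (s l) = t m then conj (γ l) else 0)) with hx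
  -- key sum collapse
  have key : ∀ (u : S), u ∈ A → ∀ (c : ℂ) (p : Fin N),
      (∑ m, k (t p) (t m) * (if u = t m then c else 0)) = k (t p) u * c := by
    intro u hu c p
    obtain ⟨m₀, hm₀⟩ := hmem u hu
    rw [Finset.sum_eq_single m₀]
    · rw [if_pos hm₀.symm, hm₀]
    · intro m _ hne
      rw [if_neg, mul_zero]
      intro h
      exact hne (ht (hm₀.trans h).symm)
    · intro h; exact absurd (Finset.mem_univ m₀) h
  -- Gram mulVec equals f
  have hG : ∀ p, ((Matrix.of fun i j => k (t i) (t j)).mulVec x) p = f (t p) := by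
    intro p
    simp only [mulVec, dotProduct, of_apply, hx]
    calc (∑ m, k (t p) (t m) *
            ∑ l, ((if s l = t m then γ l else 0) + (if σ (s l) = t m then conj (γ l) else 0)))
        = ∑ m, ∑ l, (k (t p) (t m) * (if s l = t m then γ l else 0)
            + k (t p) (t m) * (if σ (s l) = t m then conj (γ l) else 0)) := by
          refine Finset.sum_congr rfl fun m _ => ?_
          rw [Finset.mul_sum]
          exact Finset.sum_congr rfl fun l _ => by rw [mul_add]
      _ = ∑ l, ∑ m, (k (t p) (t m) * (if s l = t m then γ l else 0)
            + k (t p) (t m) * (if σ (s l) = t m then conj (γ l) else 0)) := Finset.sum_comm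
      _ = ∑ l, (k (t p) (s l) * γ l + k (t p) (σ (s l)) * conj (γ l)) := by
          refine Finset.sum_congr rfl fun l _ => ?_
          rw [Finset.sum_add_distrib]
          rw [key (s l) (Finset.mem_union_left _ (Finset.mem_image_of_mem s (Finset.mem_univ l))) (γ l) p]
          rw [key (σ (s l)) (Finset.mem_union_right _ (Finset.mem_image_of_mem (σ ∘ s) (Finset.mem_univ l))) (conj (γ l)) p]
      _ = f (t p) := by
          rw [hf]
          exact (Finset.sum_congr rfl fun l _ => by ring).symm
  -- hence x = 0
  have hx0 : x = 0 := by
    by_contra hne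
    obtain ⟨hpos, _⟩ := hspd N t ht x hne
    have hGz : (Matrix.of fun i j => k (t i) (t j)).mulVec x = 0 :=
      funext fun p => by rw [hG p]; exact hfA _ (htA p)
    rw [hGz] at hpos
    simp at hpos
  -- conclude γ = 0
  funext i
  obtain ⟨m, hm⟩ := hmem (s i)
    (Finset.mem_union_left _ (Finset.mem_image_of_mem s (Finset.mem_univ i)))
  have hxm : (∑ l, ((if s l = s i then γ l else 0)
      + (if σ (s l) = s i then conj (γ l) else 0))) = 0 := by
    have h := congrFun hx0 m
    simp only [hx, Pi.zero_apply] at h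
    rw [hm] at h
    exact h
  rw [Finset.sum_add_distrib] at hxm
  have hsum1 : (∑ l, if s l = s i then γ l else 0) = γ i := by
    rw [Finset.sum_eq_single i]
    · rw [if_pos rfl]
    · intro l _ hne
      exact if_neg fun h => hne (hdist h)
    · intro h; exact absurd (Finset.mem_univ i) h
  rw [hsum1] at hxm
  by_cases hex : ∃ l₀, s l₀ = σ (s i)
  · obtain ⟨l₀, hl₀⟩ := hex
    have hsum2 : (∑ l, if σ (s l) = s i then conj (γ l) else 0) = conj (γ l₀) := by
      rw [Finset.sum_eq_single l₀]
      · rw [if_pos (by rw [hl₀, hσ])]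
      · intro l _ hne
        rw [if_neg]
        intro h
        apply hne
        apply hdist
        rw [hl₀, ← h, hσ]
      · intro h; exact absurd (Finset.mem_univ l₀) h
    rw [hsum2, ← hγ i l₀ hl₀] at hxm
    have : (2 : ℂ) * γ i = 0 := by rw [two_mul]; exact hxm
    simpa using this
  · have hsum2 : (∑ l, if σ (s l) = s i then conj (γ l) else 0) = 0 := by
      refine Finset.sum_eq_zero fun l _ => ?_
      rw [if_neg]
      intro h
      exact hex ⟨l, by rw [← h, hσ]⟩
    rw [hsum2, add_zero] at hxm
    exact hxm


/-- **Solvability and uniqueness for the interpolation system with the symmetry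
pseudo-kernel.**  For a Hermitian, strictly positive definite kernel `k` on a set with
involution `σ` satisfying `k(s, σ s₀) = k(s₀, σ s)`, pairwise distinct points `s i`,
`K i j = k(s i, s j)` and `C i j = k(s i, σ (s j))`: the system `K γ + C conj γ = y` has
a solution iff `y j = conj (y i)` whenever `s j = σ (s i)`; in that case there is a
unique solution `γ` with `γ i = conj (γ j)` whenever `s j = σ (s i)`. -/
theorem stmt12 {S : Type*} [Nonempty S] (σ : S → S) (hσ : ∀ s, σ (σ s) = s)
    (k : S → S → ℂ)
    (hherm : ∀ s s₀, k s s₀ = conj (k s₀ s))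
    (hspd : ∀ (N : ℕ) (t : Fin N → S), Function.Injective t →
      ∀ x : Fin N → ℂ, x ≠ 0 →
        0 < (star x ⬝ᵥ (Matrix.of fun i j => k (t i) (t j)).mulVec x).re ∧
        (star x ⬝ᵥ (Matrix.of fun i j => k (t i) (t j)).mulVec x).im = 0)
    (hsym : ∀ s s₀, k s (σ s₀) = k s₀ (σ s))
    (n : ℕ) (hn : 1 ≤ n) (s : Fin n → S) (hdist : Function.Injective s)
    (y : Fin n → ℂ)
    (K C : Matrix (Fin n) (Fin n) ℂ)
    (hK : ∀ i j, K i j = k (s i) (s j))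
    (hC : ∀ i j, C i j = k (s i) (σ (s j))) :
    ((∃ γ : Fin n → ℂ, K.mulVec γ + C.mulVec (fun j => conj (γ j)) = y) ↔
      ∀ i j, s j = σ (s i) → y j = conj (y i)) ∧
    ((∀ i j, s j = σ (s i) → y j = conj (y i)) →
      ∃! γ : Fin n → ℂ,
        K.mulVec γ + C.mulVec (fun j => conj (γ j)) = y ∧
        ∀ i j, s j = σ (s i) → γ i = conj (γ j)) := by
  have lemA' := lemA σ hσ k hherm hsym s K C hK hC
  have lemB' := lemB σ hσ k hherm hspd hsym s hdist K C hK hC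
  classical
  have hswap : ∀ i j : Fin n, s j = σ (s i) → s i = σ (s j) := fun i j h => by rw [h, hσ]
  -- V as a submodule over ℝ
  let V : Submodule ℝ (Fin n → ℂ) :=
    { carrier := {v | ∀ i j, s j = σ (s i) → v i = conj (v j)}
      add_mem' := by
        intro a b ha hb i j hij
        simp only [Pi.add_apply, map_add, ha i j hij, hb i j hij]
      zero_mem' := by intro i j hij; simp
      smul_mem' := by
        intro r a ha i j hij
        simp only [Pi.smul_apply, Complex.real_smul, _root_.map_mul, Complex.conj_ofReal,
          ha i j hij] }
  have hVmem : ∀ v : Fin n → ℂ, v ∈ V ↔ ∀ i j, s j = σ (s i) → v i = conj (v j) := fun v => Iff.rfl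
  have hVy : ∀ v : Fin n → ℂ, v ∈ V ↔ ∀ i j, s j = σ (s i) → v j = conj (v i) := by
    intro v
    constructor
    · intro hv i j hij; exact hv j i (hswap i j hij)
    · intro hv i j hij; exact hv j i (hswap i j hij)
  -- the operator T
  let T : (Fin n → ℂ) →ₗ[ℝ] (Fin n → ℂ) :=
    { toFun := fun γ => K.mulVec γ + C.mulVec (fun l => conj (γ l))
      map_add' := by
        intro a b
        have h1 : (fun l => conj ((a + b) l)) = (fun l => conj (a l)) + fun l => conj (b l) := by
          funext l; simp
        rw [h1, Matrix.mulVec_add, Matrix.mulVec_add]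
        abel
      map_smul' := by
        intro r a
        have h1 : (fun l => conj ((r • a) l)) = r • fun l => conj (a l) := by
          funext l
          simp [Complex.real_smul]
        rw [h1, Matrix.mulVec_smul, Matrix.mulVec_smul, RingHom.id_apply, smul_add] }
  have hTmem : ∀ γ, T γ ∈ V := by
    intro γ
    rw [hVy]
    intro i j hij
    exact lemA' γ i j hij
  -- restricted operator
  let T' : V →ₗ[ℝ] V := (T.comp V.subtype).codRestrict V (fun v => hTmem v)
  have hT'inj : Function.Injective T' := by
    rw [injective_iff_map_eq_zero]
    intro v hv
    have h0 : T v.1 = 0 := by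
      have := congrArg (Submodule.subtype V) hv
      exact this
    have := lemB' v.1 (by exact v.2) h0
    exact Subtype.ext this
  have hT'surj : Function.Surjective T' :=
    LinearMap.injective_iff_surjective.mp hT'inj
  constructor
  · constructor
    · rintro ⟨γ, hγ⟩ i j hij
      rw [← hγ]
      exact lemA' γ i j hij
    · intro hy
      obtain ⟨v, hv⟩ := hT'surj ⟨y, (hVy y).mpr hy⟩
      exact ⟨v.1, congrArg (Submodule.subtype V) hv⟩
  · intro hy
    obtain ⟨v, hv⟩ := hT'surj ⟨y, (hVy y).mpr hy⟩
    refine ⟨v.1, ⟨congrArg (Submodule.subtype V) hv, v.2⟩, ?_⟩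
    rintro γ ⟨hγ1, hγ2⟩
    have hγV : γ ∈ V := hγ2
    have : T' ⟨γ, hγV⟩ = T' v := by
      apply Subtype.ext
      show T γ = T v.1
      have h2 : T v.1 = y := congrArg (Submodule.subtype V) hv
      show K.mulVec γ + C.mulVec (fun l => conj (γ l)) = T v.1
      rw [hγ1, h2]
    have := hT'inj this
    exact congrArg Subtype.val this
end

section
/- Let S be a nonempty set equipped with an involution σ : S → S (σ ∘ σ = id), H_ℂ a complex Hilbert space whose inner product ⟪·,·⟫ is linear in the first argument, and Φ : S → H_ℂ. Define f(s) := ⟪f, Φ s⟫ for f ∈ H_ℂ and k(s,s₀) := ⟪Φ s₀, Φ s⟫, and assume k(s, σ s₀) = k(s₀, σ s) for all s, s₀ ∈ S. Let H := {f ∈ H_ℂ : ∀ s ∈ S, f(σ s) = conj(f(s))}, a real subspace of H_ℂ. Then for every s₀ ∈ S the elements u := (1/2)·(Φ s₀ + Φ(σ s₀)) and w := (i/2)·(Φ s₀ − Φ(σ s₀)) belong to H, and for every f ∈ H: Re(f(s₀)) = Re ⟪f, u⟫ and Im(f(s₀)) = Re ⟪f, w⟫. Moreover, for all s ∈ S: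 ⟪u, Φ s⟫ − i·⟪w, Φ s⟫ = k(s, s₀) and ⟪u, Φ s⟫ + i·⟪w, Φ s⟫ = k(s, σ s₀). -/
/-!
Evaluation at `s₀` is `f ↦ ⟪Φ s₀, f⟫`, and on `H` evaluation at `σ s₀` is its conjugate, so
averaging `Φ s₀` with `Φ (σ s₀)` (resp. taking `i/2` times their difference) represents the real
(resp. imaginary) part of evaluation. The kernel condition says exactly that `σ` swaps the
functions `⟪Φ ·, Φ s₀⟫` and `⟪Φ ·, Φ (σ s₀)⟫` up to conjugation, which puts `u` and `w` in `H`;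
and `u ∓ i w` recovers `Φ s₀`, resp. `Φ (σ s₀)`.
-/

open ComplexConjugate

open scoped InnerProductSpace

namespace ConjSymmetric

variable {S E : Type*} [NormedAddCommGroup E] [InnerProductSpace ℂ E]

/-- Membership in the paper's real subspace `H`. -/
def Mem (σ : S → S) (Φ : S → E) (f : E) : Prop :=
  ∀ s, ⟪Φ (σ s), f⟫_ℂ = conj ⟪Φ s, f⟫_ℂ

lemma half_smul_add_sub_I_smul (x y : E) :
    (1 / 2 : ℂ) • (x + y) - Complex.I • (Complex.I / 2) • (x - y) = x := by
  rw [smul_smul, ← mul_div_assoc, Complex.I_mul_I]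
  module

lemma half_smul_add_add_I_smul (x y : E) :
    (1 / 2 : ℂ) • (x + y) + Complex.I • (Complex.I / 2) • (x - y) = y := by
  rw [smul_smul, ← mul_div_assoc, Complex.I_mul_I]
  module

lemma inner_half_smul_add_of_inner_eq_conj {x y f : E} (h : ⟪y, f⟫_ℂ = conj ⟪x, f⟫_ℂ) :
    ⟪(1 / 2 : ℂ) • (x + y), f⟫_ℂ = (⟪x, f⟫_ℂ).re := by
  rw [inner_smul_left, inner_add_left, h, Complex.add_conj, map_div₀, map_one, map_ofNat]
  push_cast
  ring

lemma inner_I_half_smul_sub_of_inner_eq_conj {x y f : E} (h : ⟪y, f⟫_ℂ = conj ⟪x, f⟫_ℂ) :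
    ⟪(Complex.I / 2) • (x - y), f⟫_ℂ = (⟪x, f⟫_ℂ).im := by
  rw [inner_smul_left, inner_sub_left, h, Complex.sub_conj, map_div₀, Complex.conj_I, map_ofNat]
  push_cast
  linear_combination (-(⟪x, f⟫_ℂ).im : ℂ) * Complex.I_sq

variable {σ : S → S} {Φ : S → E} {x y : E}

lemma half_smul_add_mem (hx : ∀ s, ⟪Φ (σ s), x⟫_ℂ = conj ⟪Φ s, y⟫_ℂ)
    (hy : ∀ s, ⟪Φ (σ s), y⟫_ℂ = conj ⟪Φ s, x⟫_ℂ) :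
    Mem σ Φ ((1 / 2 : ℂ) • (x + y)) := by
  intro s
  simp only [inner_smul_right, inner_add_right, hx, hy, map_mul, map_add, map_div₀, map_one,
    map_ofNat]
  ring

lemma I_half_smul_sub_mem (hx : ∀ s, ⟪Φ (σ s), x⟫_ℂ = conj ⟪Φ s, y⟫_ℂ)
    (hy : ∀ s, ⟪Φ (σ s), y⟫_ℂ = conj ⟪Φ s, x⟫_ℂ) :
    Mem σ Φ ((Complex.I / 2) • (x - y)) := by
  intro s
  simp only [inner_smul_right, inner_sub_right, hx, hy, map_mul, map_sub, map_div₀,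
    Complex.conj_I, map_ofNat]
  ring

end ConjSymmetric

open ConjSymmetric in
/-- The paper's `⟪a, b⟫` is linear in `a`, i.e. it is Mathlib's `inner ℂ b a`: evaluation is
`f(s) = inner ℂ (Φ s) f` and `k(s, s₀) = inner ℂ (Φ s) (Φ s₀)`. -/
theorem stmt13_general {S : Type*} (σ : S → S) (hσ : ∀ s, σ (σ s) = s)
    {Hc : Type*} [NormedAddCommGroup Hc] [InnerProductSpace ℂ Hc]
    (Φ : S → Hc)
    (k : S → S → ℂ) (hk : ∀ s s₀, k s s₀ = inner ℂ (Φ s) (Φ s₀))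
    (hsym : ∀ s s₀, k s (σ s₀) = k s₀ (σ s))
    (s₀ : S) (u w : Hc)
    (hu : u = (1 / 2 : ℂ) • (Φ s₀ + Φ (σ s₀)))
    (hw : w = (Complex.I / 2) • (Φ s₀ - Φ (σ s₀))) :
    (∀ s, (inner ℂ (Φ (σ s)) u : ℂ) = conj (inner ℂ (Φ s) u : ℂ)) ∧
    (∀ s, (inner ℂ (Φ (σ s)) w : ℂ) = conj (inner ℂ (Φ s) w : ℂ)) ∧
    (∀ f : Hc, (∀ s, (inner ℂ (Φ (σ s)) f : ℂ) = conj (inner ℂ (Φ s) f : ℂ)) →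
      (inner ℂ (Φ s₀) f : ℂ).re = (inner ℂ u f : ℂ).re ∧
      (inner ℂ (Φ s₀) f : ℂ).im = (inner ℂ w f : ℂ).re) ∧
    (∀ s, (inner ℂ (Φ s) u : ℂ) - Complex.I * (inner ℂ (Φ s) w : ℂ) = k s s₀) ∧
    (∀ s, (inner ℂ (Φ s) u : ℂ) + Complex.I * (inner ℂ (Φ s) w : ℂ) = k s (σ s₀)) := by
  simp only [hk] at hsym
  have hswap₁ : ∀ s, ⟪Φ (σ s), Φ s₀⟫_ℂ = conj ⟪Φ s, Φ (σ s₀)⟫_ℂ := fun s => by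
    rw [inner_conj_symm, ← hσ s₀, hsym, hσ, hσ]
  have hswap₂ : ∀ s, ⟪Φ (σ s), Φ (σ s₀)⟫_ℂ = conj ⟪Φ s, Φ s₀⟫_ℂ := fun s => by
    rw [inner_conj_symm, hsym, hσ]
  subst hu hw
  refine ⟨half_smul_add_mem hswap₁ hswap₂, I_half_smul_sub_mem hswap₁ hswap₂, fun f hf => ?_,
    fun s => ?_, fun s => ?_⟩
  · rw [inner_half_smul_add_of_inner_eq_conj (hf s₀), inner_I_half_smul_sub_of_inner_eq_conj (hf s₀)]
    simp
  · rw [hk, ← inner_smul_right, ← inner_sub_right, half_smul_add_sub_I_smul]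
  · rw [hk, ← inner_smul_right, ← inner_add_right, half_smul_add_add_I_smul]

/-- **From the kernel symmetry condition to the symmetric complex/real RKHS
(iii ⇒ i, ii).**  The paper's inner product `⟪a, b⟫` is linear in the first argument,
i.e. equals Mathlib's `inner b a`; evaluation is `f(s) = ⟪f, Φ s⟫ = inner (Φ s) f`, and
`k(s,s₀) = ⟪Φ s₀, Φ s⟫ = inner (Φ s) (Φ s₀)`.  Under `k(s, σ s₀) = k(s₀, σ s)`, the
elements `u = ½(Φ s₀ + Φ (σ s₀))` and `w = (i/2)(Φ s₀ − Φ (σ s₀))` satisfy the symmetry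
condition, represent the real and imaginary parts of evaluation at `s₀` on
`H = {f : ∀ s, f(σ s) = conj (f s)}` w.r.t. the real inner product `Re ⟪·,·⟫`, and
`⟪u, Φ s⟫ − i ⟪w, Φ s⟫ = k(s, s₀)`, `⟪u, Φ s⟫ + i ⟪w, Φ s⟫ = k(s, σ s₀)`. -/
theorem stmt13 {S : Type*} [Nonempty S] (σ : S → S) (hσ : ∀ s, σ (σ s) = s)
    {Hc : Type*} [NormedAddCommGroup Hc] [InnerProductSpace ℂ Hc] [CompleteSpace Hc]
    (Φ : S → Hc)
    (k : S → S → ℂ) (hk : ∀ s s₀, k s s₀ = inner ℂ (Φ s) (Φ s₀))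
    (hsym : ∀ s s₀, k s (σ s₀) = k s₀ (σ s))
    (s₀ : S) (u w : Hc)
    (hu : u = (1 / 2 : ℂ) • (Φ s₀ + Φ (σ s₀)))
    (hw : w = (Complex.I / 2) • (Φ s₀ - Φ (σ s₀))) :
    (∀ s, (inner ℂ (Φ (σ s)) u : ℂ) = conj (inner ℂ (Φ s) u : ℂ)) ∧
    (∀ s, (inner ℂ (Φ (σ s)) w : ℂ) = conj (inner ℂ (Φ s) w : ℂ)) ∧
    (∀ f : Hc, (∀ s, (inner ℂ (Φ (σ s)) f : ℂ) = conj (inner ℂ (Φ s) f : ℂ)) →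
      (inner ℂ (Φ s₀) f : ℂ).re = (inner ℂ u f : ℂ).re ∧
      (inner ℂ (Φ s₀) f : ℂ).im = (inner ℂ w f : ℂ).re) ∧
    (∀ s, (inner ℂ (Φ s) u : ℂ) - Complex.I * (inner ℂ (Φ s) w : ℂ) = k s s₀) ∧
    (∀ s, (inner ℂ (Φ s) u : ℂ) + Complex.I * (inner ℂ (Φ s) w : ℂ) = k s (σ s₀)) :=
  stmt13_general σ hσ Φ k hk hsym s₀ u w hu hw
end

section
/- Let S be a nonempty set equipped with an involution σ : S → S (σ ∘ σ = id), H a real Hilbert space, and Φ_re, Φ_im : S → H. Define the evaluation map ev : H → (S → ℂ) by ev f s := ⟪f, Φ_re s⟫_H + i·⟪f, Φ_im s⟫_H, the complex kernel k(s,s₀) := ev (Φ_re s₀) s − i·ev (Φ_im s₀) s, and the pseudo-kernel c(s,s₀) := ev (Φ_re s₀) s + i·ev (Φ_im s₀) s. Assume the symmetry condition: for every f ∈ H and every s ∈ S, ev f (σ s) = conj(ev f s). Then for all s, s₀ ∈ S: c(s, s₀) = k(s, σ s₀), and k(s, σ s₀) = k(s₀, σ s). -/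
open ComplexConjugate

/-! Evaluation is real-linear, so the symmetry condition is read off on the Riesz representers:
`Φre ∘ σ = Φre` and `Φim ∘ σ = -Φim`. Hence `k(s, σ s₀) = c(s, s₀)`, and the pseudo-kernel `c` is
symmetric in its two arguments for any `Φre`, `Φim`. -/

namespace ComplexRealRKHS

variable {S H : Type*} [NormedAddCommGroup H] [InnerProductSpace ℝ H] (Φre Φim : S → H)

def eval (f : H) (s : S) : ℂ :=
  ((inner ℝ f (Φre s) : ℝ) : ℂ) + ((inner ℝ f (Φim s) : ℝ) : ℂ) * Complex.I

def kernel (s s₀ : S) : ℂ :=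
  eval Φre Φim (Φre s₀) s - Complex.I * eval Φre Φim (Φim s₀) s

def pseudoKernel (s s₀ : S) : ℂ :=
  eval Φre Φim (Φre s₀) s + Complex.I * eval Φre Φim (Φim s₀) s

variable {Φre Φim}

section Symmetry

variable {σ : S → S} (hsymm : ∀ (f : H) (s : S), eval Φre Φim f (σ s) = conj (eval Φre Φim f s))
include hsymm

theorem re_comp_of_eval_conj (s : S) : Φre (σ s) = Φre s :=
  ext_inner_left ℝ fun f => by simpa [eval] using congrArg Complex.re (hsymm f s)

theorem im_comp_of_eval_conj (s : S) : Φim (σ s) = -Φim s :=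
  ext_inner_left ℝ fun f => by simpa [eval] using congrArg Complex.im (hsymm f s)

end Symmetry

theorem kernel_comp_eq_pseudoKernel {σ : S → S} {s₀ : S} (hre : Φre (σ s₀) = Φre s₀)
    (him : Φim (σ s₀) = -Φim s₀) (s : S) :
    kernel Φre Φim s (σ s₀) = pseudoKernel Φre Φim s s₀ := by
  simp only [kernel, pseudoKernel, eval, hre, him, inner_neg_left]
  push_cast
  ring

theorem pseudoKernel_comm (s s₀ : S) : pseudoKernel Φre Φim s s₀ = pseudoKernel Φre Φim s₀ s := by
  simp only [pseudoKernel, eval, real_inner_comm (Φre s₀), real_inner_comm (Φim s₀)]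
  ring

end ComplexRealRKHS

theorem stmt14_general {S : Type*} (σ : S → S)
    {H : Type*} [NormedAddCommGroup H] [InnerProductSpace ℝ H]
    (Φre Φim : S → H) (ev : H → S → ℂ)
    (hev : ∀ f s, ev f s =
      ((inner ℝ f (Φre s) : ℝ) : ℂ) + ((inner ℝ f (Φim s) : ℝ) : ℂ) * Complex.I)
    (k c : S → S → ℂ)
    (hk : ∀ s s₀, k s s₀ = ev (Φre s₀) s - Complex.I * ev (Φim s₀) s)
    (hc : ∀ s s₀, c s s₀ = ev (Φre s₀) s + Complex.I * ev (Φim s₀) s)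
    (hsymm : ∀ (f : H) (s : S), ev f (σ s) = conj (ev f s)) :
    ∀ s s₀ : S, c s s₀ = k s (σ s₀) ∧ k s (σ s₀) = k s₀ (σ s) := by
  open ComplexRealRKHS in
  obtain rfl : ev = eval Φre Φim := funext₂ hev
  obtain rfl : k = kernel Φre Φim := funext₂ hk
  obtain rfl : c = pseudoKernel Φre Φim := funext₂ hc
  have hk_comp (s s₀ : S) : kernel Φre Φim s (σ s₀) = pseudoKernel Φre Φim s s₀ :=
    kernel_comp_eq_pseudoKernel (re_comp_of_eval_conj hsymm s₀) (im_comp_of_eval_conj hsymm s₀) s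
  intro s s₀
  exact ⟨(hk_comp s s₀).symm, by rw [hk_comp, hk_comp, pseudoKernel_comm]⟩

/-- **From the symmetry condition to the pseudo-kernel formula (i ⇒ ii, iii).**
In a complex/real RKHS modeled by a real Hilbert space `H` with evaluation
`ev f s = ⟪f, Φre s⟫ + i ⟪f, Φim s⟫`, complex kernel
`k(s,s₀) = ev (Φre s₀) s − i ev (Φim s₀) s` and pseudo-kernel
`c(s,s₀) = ev (Φre s₀) s + i ev (Φim s₀) s`, if every `f ∈ H` satisfies
`ev f (σ s) = conj (ev f s)`, then `c(s,s₀) = k(s, σ s₀)` and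
`k(s, σ s₀) = k(s₀, σ s)`. -/
theorem stmt14 {S : Type*} [Nonempty S] (σ : S → S) (hσ : ∀ s, σ (σ s) = s)
    {H : Type*} [NormedAddCommGroup H] [InnerProductSpace ℝ H] [CompleteSpace H]
    (Φre Φim : S → H) (ev : H → S → ℂ)
    (hev : ∀ f s, ev f s =
      ((inner ℝ f (Φre s) : ℝ) : ℂ) + ((inner ℝ f (Φim s) : ℝ) : ℂ) * Complex.I)
    (k c : S → S → ℂ)
    (hk : ∀ s s₀, k s s₀ = ev (Φre s₀) s - Complex.I * ev (Φim s₀) s)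
    (hc : ∀ s s₀, c s s₀ = ev (Φre s₀) s + Complex.I * ev (Φim s₀) s)
    (hsymm : ∀ (f : H) (s : S), ev f (σ s) = conj (ev f s)) :
    ∀ s s₀ : S, c s s₀ = k s (σ s₀) ∧ k s (σ s₀) = k s₀ (σ s) :=
  stmt14_general σ Φre Φim ev hev k c hk hc hsymm
end

section
/- Let S be a nonempty set, H_ℂ a complex Hilbert space whose inner product ⟪·,·⟫ is linear in the first argument, and Φ : S → H_ℂ; define k₀(s,s₀) := ⟪Φ s₀, Φ s⟫. Regard H_ℂ as a real Hilbert space with inner product (f,g) ↦ Re ⟪f,g⟫, and set Φ_re s := Φ s and Φ_im s := i·Φ s. Then: (a) for every f ∈ H_ℂ and s ∈ S, Re ⟪f, Φ_re s⟫ + i·Re ⟪f, Φ_im s⟫ = ⟪f, Φ s⟫, i.e., Φ_re s and Φ_im s represent the real and imaginary parts of the evaluation f ↦ ⟪f, Φ s⟫ with respect to the real inner product; (b) the resulting complex kernel k(s,s₀) := (ev (Φ_re s₀) s) − i·(ev (Φ_im s₀) s) equals 2·k₀(s,s₀), and the resulting pseudo-kernel c(s,s₀) := (ev (Φ_re s₀)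 s) + i·(ev (Φ_im s₀) s) equals 0, where ev f s := Re ⟪f, Φ_re s⟫ + i·Re ⟪f, Φ_im s⟫. -/
open Complex

/- Regarding `Hc` as a real Hilbert space with inner product `Re ⟪·,·⟫`, the vectors `v` and `I • v`
represent the real and imaginary parts of `f ↦ ⟪v, f⟫`, because `⟪I • v, f⟫ = -I ⟪v, f⟫`.
Substituting `f = Φ s₀` and `f = I • Φ s₀` gives `k₀` and `I k₀`, so the kernel is
`k₀ - I (I k₀) = 2 k₀` and the pseudo-kernel is `k₀ + I (I k₀) = 0`. -/

theorem re_inner_add_re_inner_I_smul_mul_I {E : Type*} [NormedAddCommGroup E]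
    [InnerProductSpace ℂ E] (v f : E) :
    ((inner ℂ v f).re : ℂ) + ((inner ℂ (I • v) f).re : ℂ) * I = inner ℂ v f := by
  rw [inner_smul_left]
  apply Complex.ext <;> simp

theorem stmt17_general {S : Type*} {Hc : Type*} [NormedAddCommGroup Hc]
    [InnerProductSpace ℂ Hc] (Φ : S → Hc)
    (k₀ : S → S → ℂ) (hk₀ : ∀ s s₀, k₀ s s₀ = inner ℂ (Φ s) (Φ s₀))
    (Φre Φim : S → Hc) (hre : ∀ s, Φre s = Φ s) (him : ∀ s, Φim s = Complex.I • Φ s)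
    (ev : Hc → S → ℂ)
    (hev : ∀ f s, ev f s =
      (((inner ℂ (Φre s) f : ℂ).re : ℂ) + ((inner ℂ (Φim s) f : ℂ).re : ℂ) * Complex.I)) :
    (∀ (f : Hc) (s : S), ev f s = inner ℂ (Φ s) f) ∧
    (∀ s s₀ : S, ev (Φre s₀) s - Complex.I * ev (Φim s₀) s = 2 * k₀ s s₀) ∧
    (∀ s s₀ : S, ev (Φre s₀) s + Complex.I * ev (Φim s₀) s = 0) := by
  have hev_inner (f : Hc) (s : S) : ev f s = inner ℂ (Φ s) f := by
    rw [hev, hre, him, re_inner_add_re_inner_I_smul_mul_I]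
  have hev_feature (s s₀ : S) :
      ev (Φre s₀) s = k₀ s s₀ ∧ ev (Φim s₀) s = I * k₀ s s₀ := by
    rw [hev_inner, hev_inner, hre, him, inner_smul_right, hk₀]
    exact ⟨rfl, rfl⟩
  refine ⟨hev_inner, fun s s₀ => ?_, fun s s₀ => ?_⟩ <;>
    obtain ⟨hre_feature, him_feature⟩ := hev_feature s s₀ <;>
    rw [hre_feature, him_feature]
  · linear_combination (-k₀ s s₀) * I_sq
  · linear_combination k₀ s s₀ * I_sq

/-- **Forgetting the complex structure of a complex RKHS yields the circular
complex/real RKHS with complex kernel `2k₀` and vanishing pseudo-kernel.**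
The paper's inner product `⟪a, b⟫` is linear in the first argument, i.e. equals
Mathlib's `inner b a`; thus `k₀(s,s₀) = ⟪Φ s₀, Φ s⟫ = inner (Φ s) (Φ s₀)` and the
evaluation `f ↦ ⟪f, Φ s⟫` is `inner (Φ s) f`.  With `Φre s = Φ s`, `Φim s = i Φ s`,
and `ev f s = Re ⟪f, Φre s⟫ + i Re ⟪f, Φim s⟫`: (a) `ev f s = ⟪f, Φ s⟫`;
(b) the complex kernel `ev (Φre s₀) s − i · ev (Φim s₀) s` equals `2 k₀(s,s₀)` and the
pseudo-kernel `ev (Φre s₀) s + i · ev (Φim s₀) s` equals `0`. -/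
theorem stmt17 {S : Type*} [Nonempty S] {Hc : Type*} [NormedAddCommGroup Hc]
    [InnerProductSpace ℂ Hc] (Φ : S → Hc)
    (k₀ : S → S → ℂ) (hk₀ : ∀ s s₀, k₀ s s₀ = inner ℂ (Φ s) (Φ s₀))
    (Φre Φim : S → Hc) (hre : ∀ s, Φre s = Φ s) (him : ∀ s, Φim s = Complex.I • Φ s)
    (ev : Hc → S → ℂ)
    (hev : ∀ f s, ev f s =
      (((inner ℂ (Φre s) f : ℂ).re : ℂ) + ((inner ℂ (Φim s) f : ℂ).re : ℂ) * Complex.I)) :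
    (∀ (f : Hc) (s : S), ev f s = inner ℂ (Φ s) f) ∧
    (∀ s s₀ : S, ev (Φre s₀) s - Complex.I * ev (Φim s₀) s = 2 * k₀ s s₀) ∧
    (∀ s s₀ : S, ev (Φre s₀) s + Complex.I * ev (Φim s₀) s = 0) :=
  stmt17_general Φ k₀ hk₀ Φre Φim hre him ev hev
end
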